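/- arXiv:1805.08029 — 5 statements merged into one kernel-verified Lean document; each statement's English description precedes it below -/
import Mathlib

section
/- If two real numbers u and v have the same first r+1 partial quotients in their regular ('+') continued fraction expansions, and all partial quotients (after the 0th) of both u and v are 1 or 2, then |u - v| ≤ 10 · (2/(1+√5))^(2r). -/
/-- Iterates of the Gauss map for the regular ('+') continued fraction. -/
noncomputable def plusIter (x : ℝ) (n : ℕ) : ℝ := (fun y => (Int.fract y)⁻¹)^[n] x

/-- The n-th partial quotient of the regular continued fraction of x. -/
noncomputable def plusDigit (x : ℝ) (n : ℕ) : ℤ := ⌊plusIter x n⌋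

/-!
Write `xₙ = plusIter x n`, so that `xₙ = aₙ + 1 / xₙ₊₁` with `aₙ = plusDigit x n`. Since
`1 / a - 1 / b = (b - a) / (a b)`, the difference `u - v` of two numbers sharing the digits
`a₀, …, a_r` telescopes to `|u - v| · ∏ᵢ₌₁ʳ uᵢ vᵢ = |u_r - v_r| < 1`, the last because `u_r` and
`v_r` have the same integer part. Digits at least `1` make every product `∏ᵢ₌₁ʳ xᵢ` at least
`φ ^ r / φ`, which gives `|u - v| ≤ φ² / φ ^ (2 r)` with `φ² < 10`.
-/

open Finset Real
open scoped goldenRatio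

lemma plusIter_succ (x : ℝ) (n : ℕ) :
    plusIter x (n + 1) = (Int.fract (plusIter x n))⁻¹ := by
  simp only [plusIter, Function.iterate_succ_apply']

lemma plusIter_eq_plusDigit_add_inv (x : ℝ) (n : ℕ) :
    plusIter x n = plusDigit x n + (plusIter x (n + 1))⁻¹ := by
  rw [plusIter_succ, inv_inv, plusDigit, Int.floor_add_fract]

lemma plusIter_succ_add_one_le_mul {x : ℝ} {n : ℕ} (hn : 1 ≤ plusDigit x n)
    (hpos : 0 < plusIter x (n + 1)) :
    plusIter x (n + 1) + 1 ≤ plusIter x n * plusIter x (n + 1) := by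
  have ha : (1 : ℝ) ≤ plusDigit x n := by exact_mod_cast hn
  rw [plusIter_eq_plusDigit_add_inv x n, add_mul, inv_mul_cancel₀ hpos.ne']
  nlinarith

section DigitsAtLeastOne

variable {x : ℝ} (hx : ∀ i, 1 ≤ plusDigit x (i + 1))
include hx

lemma one_le_plusIter_succ (i : ℕ) : 1 ≤ plusIter x (i + 1) := by
  exact_mod_cast Int.le_floor.mp (hx i)

lemma plusIter_succ_pos (i : ℕ) : 0 < plusIter x (i + 1) :=
  one_pos.trans_le (one_le_plusIter_succ hx i)

/-- The weight `φ t + 1` makes the induction step exact when every digit is `1`, since then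
`xₙ = 1 + 1 / xₙ₊₁`. -/
lemma goldenRatio_pow_mul_le_prod_plusIter (n : ℕ) :
    φ ^ n * (φ * plusIter x (n + 1) + 1) ≤ φ ^ 2 * ∏ i ∈ range (n + 1), plusIter x (i + 1) := by
  have hφsq := goldenRatio_sq
  induction n with
  | zero =>
    have h1 := one_le_plusIter_succ hx 0
    simp only [pow_zero, one_mul, zero_add, range_one, prod_singleton, hφsq]
    linarith
  | succ n ih =>
    have hstep := mul_le_mul_of_nonneg_left
      (plusIter_succ_add_one_le_mul (hx n) (plusIter_succ_pos hx (n + 1)))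
      goldenRatio_pos.le
    rw [prod_range_succ]
    calc φ ^ (n + 1) * (φ * plusIter x (n + 2) + 1)
        = φ ^ n * (φ ^ 2 * plusIter x (n + 2) + φ) := by ring
      _ ≤ φ ^ n * ((φ * plusIter x (n + 1) + 1) * plusIter x (n + 2)) := by
        gcongr; rw [hφsq]; linarith
      _ ≤ φ ^ 2 * (∏ i ∈ range (n + 1), plusIter x (i + 1)) * plusIter x (n + 2) := by
        rw [← mul_assoc]; gcongr; exact (plusIter_succ_pos hx (n + 1)).le
      _ = _ := by ring

lemma goldenRatio_pow_le_mul_prod_plusIter (n : ℕ) :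
    φ ^ n ≤ φ * ∏ i ∈ range n, plusIter x (i + 1) := by
  cases n with
  | zero => simpa using one_lt_goldenRatio.le
  | succ n =>
    have h1 := one_le_plusIter_succ hx n
    refine le_of_mul_le_mul_right ?_ goldenRatio_pos
    calc φ ^ (n + 1) * φ = φ ^ n * (φ * 1 + 1) := by
          rw [pow_succ, mul_assoc, ← sq, goldenRatio_sq, mul_one]
      _ ≤ φ ^ n * (φ * plusIter x (n + 1) + 1) := by gcongr
      _ ≤ φ ^ 2 * ∏ i ∈ range (n + 1), plusIter x (i + 1) :=
        goldenRatio_pow_mul_le_prod_plusIter hx n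
      _ = _ := by ring

end DigitsAtLeastOne

lemma abs_sub_mul_prod_plusIter {u v : ℝ} {n : ℕ}
    (hdig : ∀ i < n, plusDigit u i = plusDigit v i)
    (hu : ∀ i, 0 < plusIter u (i + 1)) (hv : ∀ i, 0 < plusIter v (i + 1)) :
    |u - v| * ((∏ i ∈ range n, plusIter u (i + 1)) * ∏ i ∈ range n, plusIter v (i + 1))
      = |plusIter u n - plusIter v n| := by
  induction n with
  | zero => simp [plusIter]
  | succ n ih =>
    set a := plusIter u (n + 1)
    set b := plusIter v (n + 1)
    have hstep : (plusIter u n - plusIter v n) * (a * b) = b - a := by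
      rw [plusIter_eq_plusDigit_add_inv u n, plusIter_eq_plusDigit_add_inv v n,
        hdig n n.lt_succ_self]
      field_simp [(hu n).ne', (hv n).ne']
      ring
    calc _ = |u - v| * ((∏ i ∈ range n, plusIter u (i + 1)) * ∏ i ∈ range n, plusIter v (i + 1))
          * (a * b) := by rw [prod_range_succ, prod_range_succ]; ring
      _ = |plusIter u n - plusIter v n| * (a * b) := by
        rw [ih fun i hi => hdig i (hi.trans n.lt_succ_self)]
      _ = |a - b| := by
        rw [← abs_of_pos (mul_pos (hu n) (hv n)), ← abs_mul, hstep, abs_sub_comm]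

lemma abs_sub_mul_goldenRatio_pow_lt {u v : ℝ} {r : ℕ}
    (hdig : ∀ i ≤ r, plusDigit u i = plusDigit v i)
    (hu : ∀ i, 1 ≤ plusDigit u (i + 1)) (hv : ∀ i, 1 ≤ plusDigit v (i + 1)) :
    |u - v| * φ ^ (2 * r) < φ ^ 2 := by
  set Pu := ∏ i ∈ range r, plusIter u (i + 1)
  set Pv := ∏ i ∈ range r, plusIter v (i + 1)
  have htel : |u - v| * (Pu * Pv) < 1 := by
    rw [abs_sub_mul_prod_plusIter (fun i hi => hdig i hi.le) (plusIter_succ_pos hu)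
      (plusIter_succ_pos hv)]
    exact Int.abs_sub_lt_one_of_floor_eq_floor (hdig r le_rfl)
  have hφ := goldenRatio_pos
  have hPu := goldenRatio_pow_le_mul_prod_plusIter hu r
  have hPv := goldenRatio_pow_le_mul_prod_plusIter hv r
  calc |u - v| * φ ^ (2 * r) = |u - v| * (φ ^ r * φ ^ r) := by rw [pow_mul', sq]
    _ ≤ |u - v| * ((φ * Pu) * (φ * Pv)) := by
      gcongr
      · exact (pow_nonneg hφ.le r).trans hPu
    _ = φ ^ 2 * (|u - v| * (Pu * Pv)) := by ring
    _ < φ ^ 2 * 1 := by gcongr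
    _ = φ ^ 2 := mul_one _

theorem stmt_0 (u v : ℝ) (r : ℕ)
    (hcoin : ∀ i ≤ r, plusDigit u i = plusDigit v i)
    (hu : ∀ i, 1 ≤ i → plusDigit u i = 1 ∨ plusDigit u i = 2)
    (hv : ∀ i, 1 ≤ i → plusDigit v i = 1 ∨ plusDigit v i = 2) :
    |u - v| ≤ 10 * (2 / (1 + Real.sqrt 5)) ^ (2 * r) := by
  have hu₁ : ∀ i, 1 ≤ plusDigit u (i + 1) := fun i => by
    rcases hu (i + 1) i.succ_pos with h | h <;> omega
  have hv₁ : ∀ i, 1 ≤ plusDigit v (i + 1) := fun i => by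
    rcases hv (i + 1) i.succ_pos with h | h <;> omega
  have hclose := abs_sub_mul_goldenRatio_pow_lt hcoin hu₁ hv₁
  have hφsq : φ ^ 2 < 10 := by linarith [goldenRatio_sq, goldenRatio_lt_two]
  rw [show 2 / (1 + Real.sqrt 5) = φ⁻¹ by rw [goldenRatio, inv_div], inv_pow,
    ← div_eq_mul_inv, le_div_iff₀ (pow_pos goldenRatio_pos _)]
  linarith
end

section
/- Every positive integer solution (x, y, z) of x² + y² + z² = 3xyz with x ≤ y ≤ z and z > 1 satisfies: (y, 3xy - z, x) is another positive solution with 0 < 3xy - z < z (descent step), unless (x,y,z) = (1,1,1) or (1,1,2). -/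
theorem stmt_6 (x y z : ℤ) (hx : 0 < x) (hy : 0 < y) (hz : 0 < z)
    (h : x ^ 2 + y ^ 2 + z ^ 2 = 3 * x * y * z)
    (hxy : x ≤ y) (hyz : y ≤ z)
    (h1 : (x, y, z) ≠ (1, 1, 1)) (h2 : (x, y, z) ≠ (1, 1, 2)) :
    0 < 3 * x * y - z ∧ 3 * x * y - z < z ∧
      x ^ 2 + y ^ 2 + (3 * x * y - z) ^ 2 = 3 * x * y * (3 * x * y - z) := by
  have hprod : z * (3 * x * y - z) = x ^ 2 + y ^ 2 := by linear_combination -h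
  have hpos : 0 < 3 * x * y - z := by
    by_contra h'
    push_neg at h'
    have : z * (3 * x * y - z) ≤ 0 := mul_nonpos_of_nonneg_of_nonpos hz.le h'
    nlinarith [sq_nonneg x, sq_nonneg y, mul_pos hx hx]
  refine ⟨hpos, ?_, by linear_combination h⟩
  by_contra h'
  push_neg at h'
  have hzle : z ^ 2 ≤ x ^ 2 + y ^ 2 := by nlinarith [mul_le_mul_of_nonneg_left h' hz.le]
  have h3x : 3 * x ≤ 4 := by nlinarith [mul_pos hy hz, mul_le_mul hxy hyz hy.le hy.le]
  have hx1 : x = 1 := by omega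
  subst hx1
  have hzy : z = y := by nlinarith
  subst hzy
  have hy1 : z = 1 := by nlinarith
  subst hy1
  exact h1 rfl
end

section
/- A real quadratic irrational w has a purely periodic '−' (minus) continued fraction expansion if and only if 0 < w̃ < 1 < w, where w̃ is the Galois conjugate of w. -/
/-- Iterates of the minus continued fraction algorithm. -/
noncomputable def mIter (x : ℝ) (n : ℕ) : ℝ := (fun y => ((⌈y⌉ : ℝ) - y)⁻¹)^[n] x

/-- The n-th partial quotient of the minus continued fraction of x. -/
noncomputable def mDigit (x : ℝ) (n : ℕ) : ℤ := ⌈mIter x n⌉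

/-!
Write `w_n = mIter w n`, `b_n = mDigit w n`, and let `v_n` be the Galois conjugate of `w_n`, so
that `v_{n+1} = 1 / (b_n - v_n)`. Both `w_n` and `v_n` are the roots of an integral quadratic form
`A_n t² + B_n t + C_n` of the same discriminant as the minimal polynomial of `w`.

If `0 < v < 1 < w`, then every `w_n > 1`, so `b_n ≥ 2`, and therefore every `v_n` stays in
`(0, 1)`. The forms are then reduced (`A, C > 0 > A + B + C`), and there are only finitely many
reduced forms of a given discriminant, so `w_m = w_n` for some `m < n`. As `b_n = ⌈1 / v_{n+1}⌉`,
the expansion can be run backwards, hence `w_{n-m} = w` and the expansion is purely periodic.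

Conversely, if `w_p = w` then `v_p = v` and `w = w_p > 1`. Once some `v_n < 1`, all later `v_n`
lie in `(0, 1)`, so by periodicity `v ∈ (0, 1)`. If instead every `v_n > 1`, then `v_n` has the
same digits as `w_n` and the expansion of `v` coincides with that of `w`; but an irrational
number is determined by its digits, since the distance of two iterates with equal digits
satisfies `1 / d_{n+1} ≤ 1 / d_n - 1`.
-/

open Set

lemma mIter_zero (x : ℝ) : mIter x 0 = x := rfl

lemma mIter_succ (x : ℝ) (n : ℕ) : mIter x (n + 1) = ((mDigit x n : ℝ) - mIter x n)⁻¹ := by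
  simp [mIter, mDigit, Function.iterate_succ_apply']

lemma mIter_mIter (x : ℝ) (m n : ℕ) : mIter (mIter x n) m = mIter x (m + n) := by
  simp [mIter, Function.iterate_add_apply]

lemma mDigit_mIter (x : ℝ) (m n : ℕ) : mDigit (mIter x n) m = mDigit x (m + n) := by
  rw [mDigit, mIter_mIter, mDigit]

lemma irrational_mIter {x : ℝ} (hx : Irrational x) (n : ℕ) : Irrational (mIter x n) := by
  induction n with
  | zero => exact hx
  | succ n ih => rw [mIter_succ]; exact (ih.intCast_sub _).inv

lemma mIter_mem_Ioo {x : ℝ} (hx : Irrational x) (n : ℕ) :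
    mIter x n ∈ Ioo ((mDigit x n : ℝ) - 1) (mDigit x n) :=
  ⟨by rw [mDigit]; linarith [Int.ceil_lt_add_one (mIter x n)],
    (Int.le_ceil _).lt_of_ne ((irrational_mIter hx n).ne_int _)⟩

lemma one_lt_inv_sub_iff {b t : ℝ} : 1 < (b - t)⁻¹ ↔ t ∈ Ioo (b - 1) b := by
  rw [one_lt_inv_iff₀, mem_Ioo]
  constructor <;> rintro ⟨h₁, h₂⟩ <;> constructor <;> linarith

lemma inv_sub_mem_Ioo {b t : ℝ} (hb : 2 ≤ b) (ht : t < 1) : (b - t)⁻¹ ∈ Ioo 0 1 :=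
  ⟨inv_pos.mpr (by linarith), inv_lt_one_of_one_lt₀ (by linarith)⟩

lemma one_lt_mIter_succ {x : ℝ} (hx : Irrational x) (n : ℕ) : 1 < mIter x (n + 1) := by
  rw [mIter_succ, one_lt_inv_sub_iff]
  exact mIter_mem_Ioo hx n

lemma one_lt_mIter {x : ℝ} (hx : Irrational x) (h1 : 1 < x) (n : ℕ) : 1 < mIter x n := by
  cases n with
  | zero => exact h1
  | succ n => exact one_lt_mIter_succ hx n

lemma two_le_mDigit {x : ℝ} {n : ℕ} (h : 1 < mIter x n) : 2 ≤ mDigit x n := by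
  have : 1 < mDigit x n := Int.lt_ceil.mpr (by exact_mod_cast h)
  omega

lemma inv_abs_inv_sub_inv_le {s t : ℝ} (hs : s ∈ Ioo 0 1) (ht : t ∈ Ioo 0 1) (hst : s ≠ t) :
    |s⁻¹ - t⁻¹|⁻¹ ≤ |s - t|⁻¹ - 1 := by
  obtain ⟨hs0, hs1⟩ := hs
  obtain ⟨ht0, ht1⟩ := ht
  have hd : 0 < |s - t| := abs_pos.mpr (sub_ne_zero.mpr hst)
  have hprod : s * t ≤ 1 - |s - t| := by
    rcases le_total s t with h | h
    · rw [abs_of_nonpos (by linarith)]; nlinarith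
    · rw [abs_of_nonneg (by linarith)]; nlinarith
  rw [inv_sub_inv hs0.ne' ht0.ne', abs_div, abs_sub_comm, abs_of_pos (mul_pos hs0 ht0), inv_div,
    div_le_iff₀ hd, sub_mul, inv_mul_cancel₀ hd.ne']
  linarith

lemma eq_of_mDigit_eq {x y : ℝ} (hx : Irrational x) (hy : Irrational y)
    (h : ∀ n, mDigit x n = mDigit y n) : x = y := by
  by_contra hxy
  have key : ∀ n : ℕ, mIter x n ≠ mIter y n ∧ |mIter x n - mIter y n|⁻¹ ≤ |x - y|⁻¹ - n := by
    intro n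
    induction n with
    | zero => simp [mIter_zero, hxy]
    | succ n ih =>
      have hxn := mIter_mem_Ioo hx n
      have hyn := mIter_mem_Ioo hy n
      rw [h n] at hxn
      have hs : (mDigit y n : ℝ) - mIter x n ∈ Ioo 0 1 :=
        ⟨by linarith [hxn.2], by linarith [hxn.1]⟩
      have ht : (mDigit y n : ℝ) - mIter y n ∈ Ioo 0 1 :=
        ⟨by linarith [hyn.2], by linarith [hyn.1]⟩
      have hst : (mDigit y n : ℝ) - mIter x n ≠ mDigit y n - mIter y n :=
        fun he => ih.1 (sub_right_injective he)
      rw [mIter_succ, mIter_succ, h n]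
      refine ⟨inv_injective.ne hst, ?_⟩
      calc _ ≤ |((mDigit y n : ℝ) - mIter x n) - (mDigit y n - mIter y n)|⁻¹ - 1 :=
            inv_abs_inv_sub_inv_le hs ht hst
        _ = |mIter x n - mIter y n|⁻¹ - 1 := by rw [sub_sub_sub_cancel_left, abs_sub_comm]
        _ ≤ |x - y|⁻¹ - (n + 1 : ℕ) := by push_cast; linarith [ih.2]
  obtain ⟨n, hn⟩ := exists_nat_gt |x - y|⁻¹
  have hpos : 0 ≤ |mIter x n - mIter y n|⁻¹ := by positivity
  linarith [(key n).2]

lemma mDigit_periodic_iff {x : ℝ} (hx : Irrational x) :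
    (∃ p : ℕ, 0 < p ∧ ∀ i, mDigit x (i + p) = mDigit x i) ↔ ∃ p : ℕ, 0 < p ∧ mIter x p = x := by
  constructor
  · rintro ⟨p, hp, hper⟩
    refine ⟨p, hp, eq_of_mDigit_eq (irrational_mIter hx p) hx fun i => ?_⟩
    rw [mDigit_mIter, hper]
  · rintro ⟨p, hp, hxp⟩
    exact ⟨p, hp, fun i => by rw [← mDigit_mIter, hxp]⟩

/-- The expansion of `w` started at `v`; for `v` the Galois conjugate of `w`, its `n`-th term is the
conjugate of `mIter w n`. -/
noncomputable def conjIter (w v : ℝ) : ℕ → ℝ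
  | 0 => v
  | n + 1 => ((mDigit w n : ℝ) - conjIter w v n)⁻¹

lemma conjIter_succ (w v : ℝ) (n : ℕ) :
    conjIter w v (n + 1) = ((mDigit w n : ℝ) - conjIter w v n)⁻¹ := rfl

lemma irrational_conjIter {w v : ℝ} (hv : Irrational v) (n : ℕ) : Irrational (conjIter w v n) := by
  induction n with
  | zero => exact hv
  | succ n ih => rw [conjIter_succ]; exact (ih.intCast_sub _).inv

/-- `A t² + B t + C = A (t - x) (t - y)`. -/
def IsRootPair (A B C : ℤ) (x y : ℝ) : Prop :=
  A ≠ 0 ∧ (B : ℝ) = -A * (x + y) ∧ (C : ℝ) = A * (x * y)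

namespace IsRootPair

variable {A B C : ℤ} {x y : ℝ}

lemma of_root (hA : A ≠ 0) (hx : (A : ℝ) * x ^ 2 + B * x + C = 0) :
    IsRootPair A B C x (-B / A - x) := by
  have hA' : (A : ℝ) ≠ 0 := by exact_mod_cast hA
  refine ⟨hA, by field_simp; ring, ?_⟩
  field_simp
  linear_combination hx

lemma neg (h : IsRootPair A B C x y) : IsRootPair (-A) (-B) (-C) x y := by
  obtain ⟨hA, hB, hC⟩ := h
  exact ⟨neg_ne_zero.mpr hA, by push_cast; rw [hB]; ring, by push_cast; rw [hC]; ring⟩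

lemma exists_pos (h : IsRootPair A B C x y) :
    ∃ A' B' C' : ℤ, 0 < A' ∧ B' ^ 2 - 4 * A' * C' = B ^ 2 - 4 * A * C ∧
      IsRootPair A' B' C' x y := by
  rcases h.1.lt_or_gt with hA | hA
  · exact ⟨-A, -B, -C, by omega, by ring, h.neg⟩
  · exact ⟨A, B, C, hA, rfl, h⟩

lemma step (h : IsRootPair A B C x y) (b : ℤ) (hx : (b : ℝ) ≠ x) (hy : (b : ℝ) ≠ y) :
    IsRootPair (A * b ^ 2 + B * b + C) (-(2 * A * b + B)) A ((b - x)⁻¹) ((b - y)⁻¹) := by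
  obtain ⟨hA, hB, hC⟩ := h
  have hA' : (A : ℝ) ≠ 0 := by exact_mod_cast hA
  have hbx : (b : ℝ) - x ≠ 0 := sub_ne_zero.mpr hx
  have hby : (b : ℝ) - y ≠ 0 := sub_ne_zero.mpr hy
  have hform : ((A * b ^ 2 + B * b + C : ℤ) : ℝ) = A * (b - x) * (b - y) := by
    push_cast; rw [hB, hC]; ring
  refine ⟨by exact_mod_cast hform ▸ mul_ne_zero (mul_ne_zero hA' hbx) hby, ?_, ?_⟩
  · rw [hform]; push_cast; rw [hB]; field_simp; ring
  · rw [hform]; field_simp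

lemma irrational_right (h : IsRootPair A B C x y) (hx : Irrational x) : Irrational y := by
  obtain ⟨hA, hB, -⟩ := h
  have hA' : (A : ℝ) ≠ 0 := by exact_mod_cast hA
  have hy : y = ((-B / A : ℚ) : ℝ) - x := by push_cast; rw [hB]; field_simp; ring
  rw [hy]
  exact hx.ratCast_sub _

lemma ne (h : IsRootPair A B C x y) (hx : Irrational x) : x ≠ y := by
  obtain ⟨hA, hB, -⟩ := h
  have hA' : (A : ℝ) ≠ 0 := by exact_mod_cast hA
  rintro rfl
  refine hx ⟨-B / (2 * A), ?_⟩
  push_cast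
  rw [hB]
  field_simp
  ring

/-- The two forms are proportional because `x` is irrational. -/
lemma eq_of_irrational {A' B' C' : ℤ} {y' : ℝ} (h : IsRootPair A B C x y)
    (h' : IsRootPair A' B' C' x y') (hx : Irrational x) : y = y' := by
  obtain ⟨hA, hB, hC⟩ := h
  obtain ⟨hA', hB', hC'⟩ := h'
  have hAR : (A : ℝ) ≠ 0 := by exact_mod_cast hA
  have hAR' : (A' : ℝ) ≠ 0 := by exact_mod_cast hA'
  have hlin : ((A' * B - A * B' : ℤ) : ℝ) * x + ((A' * C - A * C' : ℤ) : ℝ) = 0 := by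
    push_cast; rw [hB, hC, hB', hC']; ring
  have hcoef : A' * B - A * B' = 0 := by
    by_contra hne
    exact ((hx.intCast_mul hne).intCast_add _).ne_zero (by rw [add_comm]; exact hlin)
  have hcoefR : (A' : ℝ) * B = A * B' := by
    rw [← sub_eq_zero]; exact_mod_cast hcoef
  rw [hB, hB'] at hcoefR
  have : (A' : ℝ) * A * (y - y') = 0 := by linear_combination -hcoefR
  simpa [hAR, hAR', sub_eq_zero] using this

lemma eq_of_lt {x' y' : ℝ} (h : IsRootPair A B C x y) (h' : IsRootPair A B C x' y')
    (hxy : y < x) (hxy' : y' < x') : x = x' := by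
  obtain ⟨hA, hB, hC⟩ := h
  obtain ⟨-, hB', hC'⟩ := h'
  have hAR : (A : ℝ) ≠ 0 := by exact_mod_cast hA
  have hsum : x + y = x' + y' := mul_left_cancel₀ (neg_ne_zero.mpr hAR) (hB.symm.trans hB')
  have hprod : x * y = x' * y' := mul_left_cancel₀ hAR (hC.symm.trans hC')
  have hdiff : (x - y) ^ 2 = (x' - y') ^ 2 := by
    linear_combination (x + y + x' + y') * hsum - 4 * hprod
  have := (pow_left_inj₀ (sub_pos.mpr hxy).le (sub_pos.mpr hxy').le two_ne_zero).mp hdiff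
  linarith

end IsRootPair

/-- The triples `(A, B, C)` of discriminant `D` for which `A t² + B t + C` has a root in `(0, 1)`
and a root `> 1`. -/
def reducedForms (D : ℤ) : Set (ℤ × ℤ × ℤ) :=
  {t | 0 < t.1 ∧ 0 < t.2.2 ∧ t.1 + t.2.1 + t.2.2 < 0 ∧ t.2.1 ^ 2 - 4 * t.1 * t.2.2 = D}

lemma reducedForms_finite (D : ℤ) : (reducedForms D).Finite := by
  refine (Set.finite_Icc (1, -(D + 4 * D ^ 2), 1) (D, 0, D)).subset ?_
  rintro ⟨A, B, C⟩ ⟨hA : 0 < A, hC : 0 < C, hABC : A + B + C < 0, rfl⟩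
  have hB : A + C + 1 ≤ -B := by omega
  have hD : 2 * (A + C) + 1 ≤ B ^ 2 - 4 * A * C := by
    nlinarith [sq_nonneg (A - C), mul_self_le_mul_self (by omega : 0 ≤ A + C + 1) hB]
  simp only [Set.mem_Icc, Prod.mk_le_mk]
  refine ⟨⟨by omega, by nlinarith, by omega⟩, by omega, by omega, by omega⟩

lemma IsRootPair.mem_reducedForms {A B C : ℤ} {x y : ℝ} (h : IsRootPair A B C x y) (hA : 0 < A)
    (hx : 1 < x) (hy : y ∈ Ioo 0 1) : (A, B, C) ∈ reducedForms (B ^ 2 - 4 * A * C) := by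
  obtain ⟨-, hB, hC⟩ := h
  have hAR : (0 : ℝ) < A := by exact_mod_cast hA
  have hCR : (0 : ℝ) < C := by rw [hC]; exact mul_pos hAR (mul_pos (by linarith) hy.1)
  have hsumR : ((A + B + C : ℤ) : ℝ) < 0 := by
    push_cast
    rw [hB, hC]
    nlinarith [mul_pos hAR (mul_pos (sub_pos.mpr hx) (sub_pos.mpr hy.2))]
  exact ⟨hA, by exact_mod_cast hCR, by exact_mod_cast hsumR, rfl⟩

lemma mIter_mul_eq_self {x : ℝ} {p : ℕ} (h : mIter x p = x) (k : ℕ) : mIter x (k * p) = x := by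
  induction k with
  | zero => rw [zero_mul, mIter_zero]
  | succ k ih => rw [Nat.succ_mul, ← mIter_mIter, h, ih]

lemma apply_zero_eq_of_apply_eq_apply_add {α : Type*} {f : ℕ → α}
    (hf : ∀ j k, f (j + 1) = f (k + 1) → f j = f k) {m d : ℕ} (h : f m = f (m + d)) :
    f 0 = f d := by
  induction m with
  | zero => simpa using h
  | succ m ih => exact ih (hf _ _ (by rwa [Nat.add_right_comm]))

section Conjugates

variable {w v : ℝ} {A B C : ℤ}

lemma conjIter_succ_mem_Ioo (hw : Irrational w) (h1 : 1 < w) {n : ℕ} (hn : conjIter w v n < 1) :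
    conjIter w v (n + 1) ∈ Ioo 0 1 := by
  rw [conjIter_succ]
  exact inv_sub_mem_Ioo (by exact_mod_cast two_le_mDigit (one_lt_mIter hw h1 n)) hn

lemma conjIter_mem_Ioo_of_le (hw : Irrational w) (h1 : 1 < w) {m n : ℕ}
    (hm : conjIter w v m ∈ Ioo 0 1) (hmn : m ≤ n) : conjIter w v n ∈ Ioo 0 1 := by
  induction n, hmn using Nat.le_induction with
  | base => exact hm
  | succ n _ ih => exact conjIter_succ_mem_Ioo hw h1 ih.2

namespace IsRootPair

lemma exists_isRootPair_mIter_conjIter (h : IsRootPair A B C w v) (hw : Irrational w) (n : ℕ) :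
    ∃ A' B' C' : ℤ, B' ^ 2 - 4 * A' * C' = B ^ 2 - 4 * A * C ∧
      IsRootPair A' B' C' (mIter w n) (conjIter w v n) := by
  induction n with
  | zero => exact ⟨A, B, C, rfl, h⟩
  | succ n ih =>
    obtain ⟨A', B', C', hD, h'⟩ := ih
    refine ⟨A' * mDigit w n ^ 2 + B' * mDigit w n + C', -(2 * A' * mDigit w n + B'), A',
      by rw [← hD]; ring, ?_⟩
    rw [mIter_succ, conjIter_succ]
    exact h'.step (mDigit w n) ((irrational_mIter hw n).ne_int _).symm
      ((irrational_conjIter (h.irrational_right hw) n).ne_int _).symm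

lemma conjIter_eq_of_mIter_eq (h : IsRootPair A B C w v) (hw : Irrational w) {m n : ℕ}
    (hmn : mIter w m = mIter w n) : conjIter w v m = conjIter w v n := by
  obtain ⟨_, _, _, -, hm⟩ := h.exists_isRootPair_mIter_conjIter hw m
  obtain ⟨_, _, _, -, hn⟩ := h.exists_isRootPair_mIter_conjIter hw n
  rw [hmn] at hm
  exact hm.eq_of_irrational hn (irrational_mIter hw n)

lemma exists_conjIter_lt_one (h : IsRootPair A B C w v) (hw : Irrational w) :
    ∃ n, conjIter w v n < 1 := by
  by_contra! hge
  have hv := h.irrational_right hw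
  have hdigit : ∀ n, ⌈conjIter w v n⌉ = mDigit w n := fun n => by
    have hmem : conjIter w v n ∈ Ioo ((mDigit w n : ℝ) - 1) (mDigit w n) := by
      rw [← one_lt_inv_sub_iff, ← conjIter_succ]
      exact (hge (n + 1)).lt_of_ne' (irrational_conjIter hv _).ne_one
    exact Int.ceil_eq_iff.mpr ⟨hmem.1, hmem.2.le⟩
  -- with all conjugates above `1`, `v` has the same expansion as `w`
  have hiter : ∀ n, mIter v n = conjIter w v n := fun n => by
    induction n with
    | zero => rfl
    | succ n ih => rw [mIter_succ, conjIter_succ, mDigit, ih, hdigit]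
  refine h.ne hw (eq_of_mDigit_eq hw hv fun n => ?_)
  show _ = ⌈mIter v n⌉
  rw [hiter, hdigit]

theorem reduced_of_mIter_eq_self (h : IsRootPair A B C w v) (hw : Irrational w) {p : ℕ}
    (hp : 0 < p) (hwp : mIter w p = w) : v ∈ Ioo 0 1 ∧ 1 < w := by
  have h1 : 1 < w := by
    obtain ⟨q, rfl⟩ := Nat.exists_eq_add_of_lt hp
    rw [← hwp]
    exact one_lt_mIter_succ hw _
  obtain ⟨n, hn⟩ := h.exists_conjIter_lt_one hw
  have hvn := conjIter_mem_Ioo_of_le hw h1 (conjIter_succ_mem_Ioo hw h1 hn)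
    (Nat.le_mul_of_pos_right (n + 1) hp)
  rw [← h.conjIter_eq_of_mIter_eq hw (m := 0) (mIter_mul_eq_self hwp (n + 1)).symm] at hvn
  exact ⟨hvn, h1⟩

lemma exists_lt_mIter_eq (h : IsRootPair A B C w v) (hw : Irrational w) (h1 : 1 < w)
    (hv : ∀ n, conjIter w v n ∈ Ioo 0 1) : ∃ m n, m < n ∧ mIter w m = mIter w n := by
  have hform : ∀ n, ∃ t ∈ reducedForms (B ^ 2 - 4 * A * C),
      IsRootPair t.1 t.2.1 t.2.2 (mIter w n) (conjIter w v n) := fun n => by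
    obtain ⟨A₁, B₁, C₁, hD₁, h₁⟩ := h.exists_isRootPair_mIter_conjIter hw n
    obtain ⟨A₂, B₂, C₂, hA₂, hD₂, h₂⟩ := h₁.exists_pos
    refine ⟨(A₂, B₂, C₂), ?_, h₂⟩
    rw [← hD₁, ← hD₂]
    exact h₂.mem_reducedForms hA₂ (one_lt_mIter hw h1 n) (hv n)
  choose f hfD hf using hform
  obtain ⟨m, n, hmn, hfmn⟩ := (reducedForms_finite _).exists_lt_map_eq_of_forall_mem hfD
  have hlt : ∀ k, conjIter w v k < mIter w k := fun k => (hv k).2.trans (one_lt_mIter hw h1 k)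
  exact ⟨m, n, hmn, (hf m).eq_of_lt (hfmn ▸ hf n) (hlt m) (hlt n)⟩

/-- The expansion runs backwards: `mDigit w j` is recovered from the conjugate `conjIter w v (j + 1)`,
which is determined by `mIter w (j + 1)`. -/
lemma mIter_eq_of_mIter_succ_eq (h : IsRootPair A B C w v) (hw : Irrational w)
    (hv : ∀ n, conjIter w v n ∈ Ioo 0 1) {j k : ℕ} (hjk : mIter w (j + 1) = mIter w (k + 1)) :
    mIter w j = mIter w k := by
  have hdigit : ∀ i, ⌈(conjIter w v (i + 1))⁻¹⌉ = mDigit w i := fun i => by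
    rw [conjIter_succ, inv_inv, Int.ceil_eq_iff]
    constructor <;> linarith [(hv i).1, (hv i).2]
  have hprev : ∀ i, mIter w i = mDigit w i - (mIter w (i + 1))⁻¹ := fun i => by
    rw [mIter_succ, inv_inv]; ring
  rw [hprev j, hprev k, hjk, ← hdigit j, ← hdigit k, h.conjIter_eq_of_mIter_eq hw hjk]

theorem exists_mIter_eq_self (h : IsRootPair A B C w v) (hw : Irrational w) (h1 : 1 < w)
    (hv : v ∈ Ioo 0 1) : ∃ p, 0 < p ∧ mIter w p = w := by
  have hvn : ∀ n, conjIter w v n ∈ Ioo 0 1 := fun n => conjIter_mem_Ioo_of_le hw h1 (m := 0) hv n.zero_le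
  obtain ⟨m, n, hmn, heq⟩ := h.exists_lt_mIter_eq hw h1 hvn
  obtain ⟨d, rfl⟩ := Nat.exists_eq_add_of_lt hmn
  exact ⟨d + 1, d.succ_pos,
    (apply_zero_eq_of_apply_eq_apply_add (fun _ _ => h.mIter_eq_of_mIter_succ_eq hw hvn) heq).symm⟩

end IsRootPair

end Conjugates

theorem stmt_9 (w : ℝ) (hw : Irrational w) (a b c : ℤ) (ha : a ≠ 0)
    (hq : (a : ℝ) * w ^ 2 + (b : ℝ) * w + (c : ℝ) = 0) :
    (∃ p : ℕ, 0 < p ∧ ∀ i, mDigit w (i + p) = mDigit w i) ↔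
      (0 < -(b : ℝ) / (a : ℝ) - w ∧ -(b : ℝ) / (a : ℝ) - w < 1 ∧ 1 < w) := by
  have hpair : IsRootPair a b c w (-b / a - w) := IsRootPair.of_root ha hq
  rw [mDigit_periodic_iff hw, ← and_assoc]
  exact ⟨fun ⟨_, hp, hwp⟩ => hpair.reduced_of_mIter_eq_self hw hp hwp,
    fun ⟨hv, h1⟩ => hpair.exists_mIter_eq_self hw h1 hv⟩
end

section
/- Two real quadratic irrationals have the same period in their '−' continued fraction expansions (up to cyclic permutation) if and only if they are equivalent under the action of PSL(2, ℤ) by Möbius transformations. -/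
open Function Filter Matrix ModularGroup
open scoped MatrixGroups

lemma exists_lt_of_frequently_two_mul_le {g : ℕ → ℝ} (h0 : 0 < g 0) (hg : Monotone g)
    (hfreq : ∀ N, ∃ n, N ≤ n ∧ 2 * g n ≤ g (n + 1)) (M : ℝ) : ∃ n, M < g n := by
  have hpow : ∀ m : ℕ, ∃ n, 2 ^ m * g 0 ≤ g n := by
    intro m
    induction m with
    | zero => exact ⟨0, by simp⟩
    | succ m ih =>
      obtain ⟨n, hn⟩ := ih
      obtain ⟨k, hnk, hk⟩ := hfreq n
      refine ⟨k + 1, ?_⟩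
      calc 2 ^ (m + 1) * g 0 = 2 * (2 ^ m * g 0) := by ring
        _ ≤ 2 * g k := by linarith [hg hnk]
        _ ≤ g (k + 1) := hk
  obtain ⟨m, hm⟩ := pow_unbounded_of_one_lt (M / g 0) one_lt_two
  obtain ⟨n, hn⟩ := hpow m
  exact ⟨n, by rw [div_lt_iff₀ h0] at hm; linarith⟩

namespace MinusCF

lemma mIter_succ (x : ℝ) (n : ℕ) : mIter x (n + 1) = ((mDigit x n : ℝ) - mIter x n)⁻¹ := by
  simp only [mIter, mDigit, iterate_succ_apply']

lemma mIter_add (x : ℝ) (m n : ℕ) : mIter x (m + n) = mIter (mIter x m) n := by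
  simp only [mIter, add_comm m n, iterate_add_apply]

lemma mDigit_add_of_mIter_eq {x y : ℝ} {m n : ℕ} (h : mIter x m = mIter y n) (k : ℕ) :
    mDigit x (m + k) = mDigit y (n + k) := by
  simp only [mDigit, mIter_add, h]

lemma irrational_mIter {x : ℝ} (hx : Irrational x) (n : ℕ) : Irrational (mIter x n) := by
  induction n with
  | zero => exact hx
  | succ n ih => rw [mIter_succ]; exact (ih.intCast_sub _).inv

/-- Complete quotients `X n = d n - 1 / X (n + 1)` of a '−' expansion with partial quotients
`d n = ⌈X n⌉`. -/
structure IsCompleteQuotients (d : ℕ → ℤ) (X : ℕ → ℝ) : Prop where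
  sub_one_lt : ∀ n, (d n : ℝ) - 1 < X n
  lt : ∀ n, X n < d n
  succ : ∀ n, X (n + 1) = ((d n : ℝ) - X n)⁻¹

lemma isCompleteQuotients_mIter {x : ℝ} (hx : Irrational x) :
    IsCompleteQuotients (mDigit x) (mIter x) where
  sub_one_lt n := by
    have := Int.ceil_lt_add_one (mIter x n)
    rw [mDigit]; linarith
  lt n := (Int.le_ceil _).lt_of_ne ((irrational_mIter hx n).ne_int _)
  succ := mIter_succ x

namespace IsCompleteQuotients

variable {d : ℕ → ℤ} {X Y : ℕ → ℝ}

lemma shift (h : IsCompleteQuotients d X) (k : ℕ) :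
    IsCompleteQuotients (fun n => d (k + n)) (fun n => X (k + n)) :=
  ⟨fun _ => h.sub_one_lt _, fun _ => h.lt _, fun n => h.succ (k + n)⟩

lemma one_lt (h : IsCompleteQuotients d X) {n : ℕ} (hn : 0 < n) : 1 < X n := by
  obtain ⟨n, rfl⟩ := Nat.exists_eq_add_of_lt hn
  rw [zero_add, h.succ]
  have := h.sub_one_lt n
  have := h.lt n
  exact (one_lt_inv₀ (by linarith)).2 (by linarith)

lemma two_le (h : IsCompleteQuotients d X) {n : ℕ} (hn : 0 < n) : 2 ≤ d n := by
  have : (1 : ℝ) < d n := (h.one_lt hn).trans (h.lt n)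
  have : (1 : ℤ) < d n := by exact_mod_cast this
  omega

lemma exists_three_le (h : IsCompleteQuotients d X) (N : ℕ) : ∃ n, N ≤ n ∧ 3 ≤ d n := by
  by_contra! hd
  have h2 : ∀ k, d (N + 1 + k) = 2 := fun k => by
    have := h.two_le (n := N + 1 + k) (by omega)
    have := hd (N + 1 + k) (by omega)
    omega
  -- on a tail of 2's, `(X - 1)⁻¹` decreases by exactly 1 at each step
  set u : ℕ → ℝ := fun k => (X (N + 1 + k) - 1)⁻¹
  have hu_pos : ∀ k, 0 < u k := fun k =>
    inv_pos.2 (by linarith [h.one_lt (n := N + 1 + k) (by omega)])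
  have hu_succ : ∀ k, u (k + 1) = u k - 1 := fun k => by
    have h1 := h.one_lt (n := N + 1 + k) (by omega)
    have hlt := h.lt (N + 1 + k)
    have hs := h.succ (N + 1 + k)
    rw [h2] at hlt hs
    push_cast at hlt hs
    set Z := X (N + 1 + k)
    have hZ1 : Z - 1 ≠ 0 := by linarith
    have hZ2 : (2 : ℝ) - Z ≠ 0 := by linarith
    show (X (N + 1 + k + 1) - 1)⁻¹ = (Z - 1)⁻¹ - 1
    rw [hs, show (2 - Z)⁻¹ - 1 = (Z - 1) / (2 - Z) by field_simp; ring, inv_div]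
    field_simp
    ring
  have hu : ∀ k : ℕ, u k = u 0 - k := fun k => by
    induction k with
    | zero => simp
    | succ k ih => rw [hu_succ, ih]; push_cast; ring
  obtain ⟨k, hk⟩ := exists_nat_gt (u 0)
  linarith [hu_pos k, hu k]

lemma head_eq (hX : IsCompleteQuotients d X) (hY : IsCompleteQuotients d Y) : X 0 = Y 0 := by
  set g : ℕ → ℝ := fun n => |X n - Y n|
  have hg_lt : ∀ n, g n < 1 := fun n => by
    have := hX.sub_one_lt n; have := hX.lt n; have := hY.sub_one_lt n; have := hY.lt n
    exact abs_sub_lt_iff.2 ⟨by linarith, by linarith⟩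
  have hpos : ∀ n, 1 < X (n + 1) * Y (n + 1) := fun n =>
    one_lt_mul_of_lt_of_le (hX.one_lt n.succ_pos) (hY.one_lt n.succ_pos).le
  have hg_succ : ∀ n, g (n + 1) = g n * (X (n + 1) * Y (n + 1)) := fun n => by
    have hXn : X (n + 1) ≠ 0 := (zero_lt_one.trans (hX.one_lt n.succ_pos)).ne'
    have hYn : Y (n + 1) ≠ 0 := (zero_lt_one.trans (hY.one_lt n.succ_pos)).ne'
    have hdiff : X n - Y n = (Y (n + 1))⁻¹ - (X (n + 1))⁻¹ := by
      rw [hX.succ, hY.succ, inv_inv, inv_inv]; ring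
    have hprod : X (n + 1) - Y (n + 1) = (X n - Y n) * (X (n + 1) * Y (n + 1)) := by
      rw [hdiff]; field_simp
    simp only [g, hprod, abs_mul, abs_of_pos (zero_lt_one.trans (hpos n))]
  by_contra hne
  have h0 : 0 < g 0 := abs_pos.2 (sub_ne_zero.2 hne)
  have hmono : Monotone g := monotone_nat_of_le_succ fun n => by
    rw [hg_succ]
    exact le_mul_of_one_le_right (abs_nonneg _) (hpos n).le
  have hfreq : ∀ N, ∃ n, N ≤ n ∧ 2 * g n ≤ g (n + 1) := fun N => by
    obtain ⟨n, hn, h3⟩ := hX.exists_three_le (N + 1)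
    obtain ⟨m, rfl⟩ : ∃ m, n = m + 1 := ⟨n - 1, by omega⟩
    refine ⟨m, by omega, ?_⟩
    have h3 : (3 : ℝ) ≤ d (m + 1) := by exact_mod_cast h3
    have hX2 : 2 < X (m + 1) := by linarith [hX.sub_one_lt (m + 1)]
    have hY2 : 2 < Y (m + 1) := by linarith [hY.sub_one_lt (m + 1)]
    have h4 : 2 ≤ X (m + 1) * Y (m + 1) := by nlinarith
    rw [hg_succ, mul_comm 2]
    exact mul_le_mul_of_nonneg_left h4 (abs_nonneg _)
  obtain ⟨n, hn⟩ := exists_lt_of_frequently_two_mul_le h0 hmono hfreq 1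
  linarith [hg_lt n]

end IsCompleteQuotients

noncomputable def mobius (g : SL(2, ℤ)) (x : ℝ) : ℝ :=
  ((g 0 0 : ℝ) * x + (g 0 1 : ℝ)) / ((g 1 0 : ℝ) * x + (g 1 1 : ℝ))

lemma det_SL2 (g : SL(2, ℤ)) : (g 0 0 : ℝ) * g 1 1 - g 0 1 * g 1 0 = 1 := by
  have := g.det_coe
  rw [Matrix.det_fin_two] at this
  exact_mod_cast this

lemma mobius_denom_ne_zero (g : SL(2, ℤ)) {x : ℝ} (hx : Irrational x) :
    (g 1 0 : ℝ) * x + g 1 1 ≠ 0 := by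
  by_cases hc : g 1 0 = 0
  · have hd : (g 1 1 : ℝ) ≠ 0 := by
      intro hd
      simpa [hc, hd] using det_SL2 g
    simpa [hc] using hd
  · exact ((hx.intCast_mul hc).add_intCast _).ne_zero

lemma mobius_one (x : ℝ) : mobius 1 x = x := by
  simp [mobius]

lemma mobius_S (x : ℝ) : mobius S x = -x⁻¹ := by
  simp [mobius, neg_div]

lemma mobius_T_zpow (m : ℤ) (x : ℝ) : mobius (T ^ m) x = x + m := by
  simp [mobius, coe_T_zpow]

lemma mobius_ratCast (g : SL(2, ℤ)) (q : ℚ) :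
    mobius g q = (((g 0 0 : ℚ) * q + g 0 1) / ((g 1 0 : ℚ) * q + g 1 1) : ℚ) := by
  simp [mobius]

lemma mobius_inv_mobius (g : SL(2, ℤ)) {x : ℝ} (hden : (g 1 0 : ℝ) * x + g 1 1 ≠ 0) :
    mobius g⁻¹ (mobius g x) = x := by
  have hdet := det_SL2 g
  have hy : mobius g x * ((g 1 0 : ℝ) * x + g 1 1) = (g 0 0 : ℝ) * x + g 0 1 :=
    div_mul_cancel₀ _ hden
  set y := mobius g x
  simp only [mobius, SpecialLinearGroup.SL2_inv_expl, Fin.isValue, cons_val', cons_val_zero,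
    cons_val_one, empty_val', cons_val_fin_one, Int.cast_neg]
  have hnum : (g 1 1 : ℝ) * y + -(g 0 1 : ℝ) = x * ((g 1 0 : ℝ) * x + g 1 1)⁻¹ := by
    rw [eq_mul_inv_iff_mul_eq₀ hden]; linear_combination (g 1 1 : ℝ) * hy + x * hdet
  have hden' : -(g 1 0 : ℝ) * y + g 0 0 = ((g 1 0 : ℝ) * x + g 1 1)⁻¹ :=
    eq_inv_of_mul_eq_one_left (by linear_combination -(g 1 0 : ℝ) * hy + hdet)
  rw [hnum, hden', mul_div_cancel_right₀ x (inv_ne_zero hden)]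

lemma irrational_mobius (g : SL(2, ℤ)) {x : ℝ} (hx : Irrational x) : Irrational (mobius g x) := by
  rintro ⟨q, hq⟩
  exact hx ⟨_, (mobius_ratCast g⁻¹ q).symm.trans
    (by rw [hq, mobius_inv_mobius g (mobius_denom_ne_zero g hx)])⟩

lemma mobius_mul (g h : SL(2, ℤ)) {x : ℝ} (hx : Irrational x) :
    mobius (g * h) x = mobius g (mobius h x) := by
  have hmul : ∀ i j, (g * h) i j = g i 0 * h 0 j + g i 1 * h 1 j := fun i j => by
    simp [Matrix.mul_apply, Fin.sum_univ_two]
  have hh := mobius_denom_ne_zero h hx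
  have hgh := mobius_denom_ne_zero (g * h) hx
  have hy : mobius h x * ((h 1 0 : ℝ) * x + h 1 1) = (h 0 0 : ℝ) * x + h 0 1 :=
    div_mul_cancel₀ _ hh
  set y := mobius h x
  simp only [mobius, hmul, Int.cast_add, Int.cast_mul] at hgh ⊢
  have hD : ((g 1 0 : ℝ) * y + g 1 1) * ((h 1 0 : ℝ) * x + h 1 1) =
      (g 1 0 * h 0 0 + g 1 1 * h 1 0) * x + (g 1 0 * h 0 1 + g 1 1 * h 1 1) := by
    linear_combination (g 1 0 : ℝ) * hy
  have hN : ((g 0 0 : ℝ) * y + g 0 1) * ((h 1 0 : ℝ) * x + h 1 1) =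
      (g 0 0 * h 0 0 + g 0 1 * h 1 0) * x + (g 0 0 * h 0 1 + g 0 1 * h 1 1) := by
    linear_combination (g 0 0 : ℝ) * hy
  rw [div_eq_div_iff hgh (left_ne_zero_of_mul (hD ▸ hgh))]
  linear_combination (-((g 1 0 : ℝ) * y + g 1 1)) * hN + ((g 0 0 : ℝ) * y + g 0 1) * hD

lemma exists_mIter_eq_mobius {x : ℝ} (hx : Irrational x) (n : ℕ) :
    ∃ g : SL(2, ℤ), mIter x n = mobius g x := by
  induction n with
  | zero => exact ⟨1, (mobius_one x).symm⟩
  | succ n ih =>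
    obtain ⟨g, hg⟩ := ih
    refine ⟨S * T ^ (-mDigit x n) * g, ?_⟩
    rw [mobius_mul _ _ hx, ← hg, mobius_mul _ _ (irrational_mIter hx n), mobius_T_zpow,
      mobius_S, mIter_succ, Int.cast_neg, ← sub_eq_add_neg, ← inv_neg, neg_sub]

def TailEquiv (x y : ℝ) : Prop := ∃ m n, mIter x m = mIter y n

namespace TailEquiv

lemma refl (x : ℝ) : TailEquiv x x := ⟨0, 0, rfl⟩

lemma symm {x y : ℝ} (h : TailEquiv x y) : TailEquiv y x :=
  let ⟨m, n, h⟩ := h; ⟨n, m, h.symm⟩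

lemma trans {x y z : ℝ} (hxy : TailEquiv x y) (hyz : TailEquiv y z) : TailEquiv x z := by
  obtain ⟨m, n, hxy⟩ := hxy
  obtain ⟨n', k, hyz⟩ := hyz
  refine ⟨m + n', k + n, ?_⟩
  rw [mIter_add, hxy, ← mIter_add, add_comm n n', mIter_add, hyz, ← mIter_add]

end TailEquiv

lemma tailEquiv_mIter (x : ℝ) (n : ℕ) : TailEquiv (mIter x n) x := ⟨0, n, rfl⟩

lemma tailEquiv_add_intCast (x : ℝ) (k : ℤ) : TailEquiv (x + k) x :=
  ⟨1, 1, by simp [mIter, Int.ceil_add_intCast]⟩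

lemma tailEquiv_neg_inv_of_one_lt {x : ℝ} (hx : 1 < x) : TailEquiv (-x⁻¹) x := by
  have hceil : ⌈-x⁻¹⌉ = 0 := by
    rw [Int.ceil_eq_zero_iff]
    exact ⟨by linarith [inv_lt_one_of_one_lt₀ hx], by linarith [inv_pos.2 (zero_lt_one.trans hx)]⟩
  exact ⟨1, 0, by simp [mIter, hceil]⟩

lemma tailEquiv_neg_inv_of_pos {x : ℝ} (hx : Irrational x) (h0 : 0 < x) :
    TailEquiv (-x⁻¹) x := by
  obtain ⟨n, hn⟩ := exists_nat_gt x⁻¹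
  induction n generalizing x with
  | zero => exact absurd hn (by simpa using h0.le)
  | succ n ih =>
    rcases hx.ne_one.lt_or_gt with h1 | h1
    · -- the first partial quotient of `x` is 1, so `mIter x 1 = z + 1` with `z⁻¹ = x⁻¹ - 1`
      have hx1 : (0 : ℝ) < 1 - x := by linarith
      set z := (1 - x)⁻¹ - 1
      have hz : Irrational z := by simpa using (hx.intCast_sub 1).inv.sub_intCast 1
      have hz_inv : z⁻¹ = x⁻¹ - 1 := by
        have hz_eq : z = x / (1 - x) := by simp only [z]; field_simp; ring
        rw [hz_eq, inv_div, sub_div, one_div, div_self h0.ne']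
      have hz0 : 0 < z := by simpa [z] using one_lt_inv₀ hx1 |>.2 (by linarith)
      have hmIter : mIter x 1 = z + (1 : ℤ) := by
        have hceil : ⌈x⌉ = 1 := Int.ceil_eq_iff.2 ⟨by norm_num [h0], by exact_mod_cast h1.le⟩
        simp [mIter, hceil, z]
      have hneg : -x⁻¹ = -z⁻¹ + ((-1 : ℤ) : ℝ) := by rw [hz_inv]; push_cast; ring
      rw [hneg]
      refine (tailEquiv_add_intCast _ _).trans ((ih hz hz0 ?_).trans ?_)
      · rw [hz_inv]; push_cast at hn; linarith
      · exact (tailEquiv_add_intCast z 1).symm.trans (hmIter ▸ tailEquiv_mIter x 1)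
    · exact tailEquiv_neg_inv_of_one_lt h1

lemma tailEquiv_neg_inv {x : ℝ} (hx : Irrational x) : TailEquiv (-x⁻¹) x := by
  rcases hx.ne_zero.lt_or_gt with h0 | h0
  · have := tailEquiv_neg_inv_of_pos hx.inv.neg (neg_pos.2 (inv_lt_zero.2 h0))
    rw [inv_neg, inv_inv, neg_neg] at this
    exact this.symm
  · exact tailEquiv_neg_inv_of_pos hx h0

lemma tailEquiv_mobius (g : SL(2, ℤ)) {x : ℝ} (hx : Irrational x) :
    TailEquiv (mobius g x) x := by
  have hg : g ∈ Subgroup.closure {S, T} := SpecialLinearGroup.SL2Z_generators ▸ Subgroup.mem_top g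
  induction hg using Subgroup.closure_induction generalizing x with
  | mem g hg =>
    rcases hg with rfl | rfl
    · rw [mobius_S]; exact tailEquiv_neg_inv hx
    · have hT := mobius_T_zpow 1 x
      rw [zpow_one, Int.cast_one] at hT
      rw [hT]
      exact_mod_cast tailEquiv_add_intCast x 1
  | one => rw [mobius_one]; exact TailEquiv.refl x
  | mul g h _ _ hg hh =>
    rw [mobius_mul _ _ hx]
    exact (hg (irrational_mobius h hx)).trans (hh hx)
  | inv g _ hg =>
    have hgg := hg (irrational_mobius g⁻¹ hx)
    rw [← mobius_mul _ _ hx, mul_inv_cancel, mobius_one] at hgg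
    exact hgg.symm

/-- Substituting `Y = d - 1 / Y'` into `A Y² + B Y + C` and multiplying by `Y'²`. -/
def formStep (d : ℤ) (q : ℤ × ℤ × ℤ) : ℤ × ℤ × ℤ :=
  (q.1 * d ^ 2 + q.2.1 * d + q.2.2, -(2 * q.1 * d + q.2.1), q.1)

def disc (q : ℤ × ℤ × ℤ) : ℤ := q.2.1 ^ 2 - 4 * q.1 * q.2.2

lemma disc_formStep (d : ℤ) (q : ℤ × ℤ × ℤ) : disc (formStep d q) = disc q := by
  simp only [disc, formStep]; ring

/-- `q.1 Y² + q.2.1 Y + q.2.2 = q.1 (Y - X) (Y - t)`. -/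
structure HasRoots (q : ℤ × ℤ × ℤ) (X t : ℝ) : Prop where
  fst_ne_zero : (q.1 : ℝ) ≠ 0
  snd_eq : (q.2.1 : ℝ) = -q.1 * (X + t)
  snd_snd_eq : (q.2.2 : ℝ) = q.1 * X * t

namespace HasRoots

variable {q : ℤ × ℤ × ℤ} {X t : ℝ}

lemma of_eval {a b c : ℤ} {x : ℝ} (ha : a ≠ 0) (hx : (a : ℝ) * x ^ 2 + b * x + c = 0) :
    HasRoots (a, b, c) x (-b / a - x) := by
  have ha' : (a : ℝ) ≠ 0 := Int.cast_ne_zero.2 ha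
  refine ⟨ha', ?_, ?_⟩ <;> dsimp only
  · field_simp; ring
  · field_simp; linear_combination hx

lemma irrational_snd (h : HasRoots q X t) (hX : Irrational X) : Irrational t := by
  have ht : t = ((-(q.2.1 : ℚ) / q.1 : ℚ) : ℝ) - X := by
    have := h.fst_ne_zero
    push_cast; rw [h.snd_eq]; field_simp; ring
  rw [ht]
  exact hX.ratCast_sub _

lemma ne (h : HasRoots q X t) (hX : Irrational X) : X ≠ t := by
  intro hXt
  refine hX ⟨-(q.2.1 : ℚ) / (2 * q.1), ?_⟩
  have := h.fst_ne_zero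
  push_cast; rw [h.snd_eq, ← hXt]; field_simp; ring

lemma disc_eq (h : HasRoots q X t) : (disc q : ℝ) = (q.1 * (X - t)) ^ 2 := by
  simp only [disc, Int.cast_sub, Int.cast_pow, Int.cast_mul, Int.cast_ofNat, h.snd_eq,
    h.snd_snd_eq]
  ring

lemma formStep (h : HasRoots q X t) {d : ℤ} (hX : X ≠ d) (ht : t ≠ d) :
    HasRoots (MinusCF.formStep d q) ((d - X)⁻¹) ((d - t)⁻¹) := by
  have hA := h.fst_ne_zero
  have hX' : (d : ℝ) - X ≠ 0 := sub_ne_zero.2 hX.symm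
  have ht' : (d : ℝ) - t ≠ 0 := sub_ne_zero.2 ht.symm
  have hA' : ((MinusCF.formStep d q).1 : ℝ) = q.1 * (d - X) * (d - t) := by
    simp only [MinusCF.formStep]; push_cast; rw [h.snd_eq, h.snd_snd_eq]; ring
  refine ⟨hA' ▸ mul_ne_zero (mul_ne_zero hA hX') ht', ?_, ?_⟩ <;> rw [hA']
  · simp only [MinusCF.formStep]; push_cast; rw [h.snd_eq]; field_simp; ring
  · simp only [MinusCF.formStep]; field_simp

lemma eq_of_hasRoots (h : HasRoots q X t) {X' t' : ℝ} (h' : HasRoots q X' t') (hne : X' ≠ t) :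
    X' = X := by
  have hA := h.fst_ne_zero
  have hsum : X + t = X' + t' := by
    have := h.snd_eq.symm.trans h'.snd_eq
    exact mul_left_cancel₀ (neg_ne_zero.2 hA) this
  have hprod : X * t = X' * t' := by
    have := h.snd_snd_eq.symm.trans h'.snd_snd_eq
    rw [mul_assoc, mul_assoc] at this
    exact mul_left_cancel₀ hA this
  have : (X' - X) * (X' - t) = 0 := by linear_combination (-X') * hsum + hprod
  exact sub_eq_zero.1 ((mul_eq_zero.1 this).resolve_right (sub_ne_zero.2 hne))

lemma abs_le (h : HasRoots q X t) (hX : 1 < X) (ht0 : 0 < t) (ht1 : t < 1) :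
    |q.1| ≤ 3 * disc q ∧ |q.2.1| ≤ 3 * disc q ∧ |q.2.2| ≤ 3 * disc q := by
  set α := |(q.1 : ℝ)|
  have hα : 0 < α := abs_pos.2 h.fst_ne_zero
  set u := α * (X - t)
  have hu : 0 < u := mul_pos hα (by linarith)
  have hD : (disc q : ℝ) = u ^ 2 := by rw [h.disc_eq, mul_pow, mul_pow, sq_abs]
  -- the value of the form at `1` is a nonzero integer
  have hsum : ((q.1 + q.2.1 + q.2.2 : ℤ) : ℝ) = q.1 * (1 - X) * (1 - t) := by
    push_cast; rw [h.snd_eq, h.snd_snd_eq]; ring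
  have hsum_ne : q.1 + q.2.1 + q.2.2 ≠ 0 := by
    intro h0
    rw [h0, Int.cast_zero] at hsum
    exact mul_ne_zero (mul_ne_zero h.fst_ne_zero (by linarith)) (by linarith) hsum.symm
  have h1 : 1 ≤ α * ((X - 1) * (1 - t)) := by
    have : (1 : ℝ) ≤ |((q.1 + q.2.1 + q.2.2 : ℤ) : ℝ)| := by exact_mod_cast Int.one_le_abs hsum_ne
    rwa [hsum, abs_mul, abs_mul, abs_of_neg (by linarith : 1 - X < 0),
      abs_of_pos (by linarith : 0 < 1 - t), neg_sub, mul_assoc] at this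
  have hαD : α ≤ disc q := by
    rw [hD]
    calc α ≤ α * (α * ((X - 1) * (1 - t))) := le_mul_of_one_le_right hα.le h1
      _ ≤ α * (α * ((X - t) * (X - t))) := by gcongr; linarith
      _ = u ^ 2 := by ring
  have huD : u ≤ disc q := by
    have : (0 : ℤ) < disc q := by exact_mod_cast (hD ▸ pow_pos hu 2 : (0 : ℝ) < disc q)
    have : (1 : ℝ) ≤ disc q := by exact_mod_cast this
    nlinarith
  have hαt : α * t ≤ α := mul_le_of_le_one_right hα.le ht1.le
  have hB : |(q.2.1 : ℝ)| = u + 2 * (α * t) := by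
    rw [h.snd_eq, abs_mul, abs_neg, abs_of_pos (by linarith : 0 < X + t)]; ring
  have hC : |(q.2.2 : ℝ)| ≤ u + α * t := by
    rw [h.snd_snd_eq, abs_mul, abs_mul, abs_of_pos (by linarith : 0 < X), abs_of_pos ht0]
    nlinarith
  refine ⟨?_, ?_, ?_⟩ <;> rw [← Int.cast_le (R := ℝ)] <;> push_cast <;> linarith

end HasRoots

noncomputable def orbit (d : ℕ → ℤ) (t : ℝ) : ℕ → ℝ
  | 0 => t
  | n + 1 => ((d n : ℝ) - orbit d t n)⁻¹

def formSeq (d : ℕ → ℤ) (q : ℤ × ℤ × ℤ) : ℕ → ℤ × ℤ × ℤ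
  | 0 => q
  | n + 1 => formStep (d n) (formSeq d q n)

lemma disc_formSeq (d : ℕ → ℤ) (q : ℤ × ℤ × ℤ) (n : ℕ) : disc (formSeq d q n) = disc q := by
  induction n with
  | zero => rfl
  | succ n ih => rw [formSeq, disc_formStep, ih]

lemma hasRoots_formSeq {x t : ℝ} {q : ℤ × ℤ × ℤ} (hx : Irrational x) (h : HasRoots q x t)
    (n : ℕ) : HasRoots (formSeq (mDigit x) q n) (mIter x n) (orbit (mDigit x) t n) := by
  induction n with
  | zero => exact h
  | succ n ih =>
    have hXn := irrational_mIter hx n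
    rw [mIter_succ]
    exact ih.formStep (hXn.ne_int _) ((ih.irrational_snd hXn).ne_int _)

lemma eventually_orbit_mem_Ioo {x t : ℝ} {q : ℤ × ℤ × ℤ} (hx : Irrational x)
    (h : HasRoots q x t) : ∀ᶠ n in atTop, 0 < orbit (mDigit x) t n ∧ orbit (mDigit x) t n < 1 := by
  set d := mDigit x
  set T := orbit d t
  have hX := isCompleteQuotients_mIter hx
  have hroots := hasRoots_formSeq hx h
  have hT_irr : ∀ n, Irrational (T n) := fun n => (hroots n).irrational_snd (irrational_mIter hx n)
  have hT_succ : ∀ n, T (n + 1) = ((d n : ℝ) - T n)⁻¹ := fun n => rfl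
  have hstep : ∀ n, 0 < n → T n < 1 → 0 < T (n + 1) ∧ T (n + 1) < 1 := by
    intro n hn hT
    have h2 : (2 : ℝ) ≤ d n := by exact_mod_cast hX.two_le hn
    rw [hT_succ]
    exact ⟨inv_pos.2 (by linarith), inv_lt_one_of_one_lt₀ (by linarith)⟩
  by_cases hex : ∃ n, 0 < n ∧ T n < 1
  · obtain ⟨n, hn, hT⟩ := hex
    refine eventually_atTop.2 ⟨n + 1, fun m hm => ?_⟩
    induction m, hm using Nat.le_induction with
    | base => exact hstep n hn hT
    | succ m hm ih => exact hstep m (by omega) ih.2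
  · -- otherwise `T` would be, from index 1 on, a second sequence of complete quotients with the
    -- partial quotients of `x`
    push Not at hex
    have hT1 : ∀ n, 0 < n → 1 < T n := fun n hn => (hex n hn).lt_of_ne (hT_irr n).ne_one.symm
    have hinv : ∀ n, 1 < ((d (1 + n) : ℝ) - T (1 + n))⁻¹ := fun n => hT_succ _ ▸ hT1 _ (by omega)
    have hlt : ∀ n, T (1 + n) < d (1 + n) := fun n =>
      lt_of_not_ge fun hge => by linarith [hinv n, inv_nonpos.2 (sub_nonpos.2 hge)]
    have hT : IsCompleteQuotients (fun n => d (1 + n)) (fun n => T (1 + n)) :=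
      ⟨fun n => by linarith [(one_lt_inv₀ (sub_pos.2 (hlt n))).1 (hinv n)], hlt,
        fun n => hT_succ (1 + n)⟩
    exact absurd ((hX.shift 1).head_eq hT) ((hroots 1).ne (irrational_mIter hx 1))

lemma exists_mIter_add_eq {x : ℝ} (hx : Irrational x) {a b c : ℤ} (ha : a ≠ 0)
    (hroot : (a : ℝ) * x ^ 2 + b * x + c = 0) : ∃ N p, 0 < p ∧ mIter x (N + p) = mIter x N := by
  have h0 := HasRoots.of_eval ha hroot
  have hX := isCompleteQuotients_mIter hx
  obtain ⟨K, hK⟩ :=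
    eventually_atTop.1 ((eventually_orbit_mem_Ioo hx h0).and (eventually_gt_atTop 0))
  set D := disc (a, b, c)
  set box : Finset (ℤ × ℤ × ℤ) :=
    Finset.Icc (-(3 * D)) (3 * D) ×ˢ Finset.Icc (-(3 * D)) (3 * D) ×ˢ Finset.Icc (-(3 * D)) (3 * D)
  have hmem : ∀ n, formSeq (mDigit x) (a, b, c) (K + n) ∈ (box : Set (ℤ × ℤ × ℤ)) := fun n => by
    obtain ⟨⟨ht0, ht1⟩, hpos⟩ := hK (K + n) (by omega)
    have := (hasRoots_formSeq hx h0 (K + n)).abs_le (hX.one_lt hpos) ht0 ht1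
    rw [disc_formSeq] at this
    simp only [box, Finset.coe_product, Set.mem_prod, Finset.coe_Icc, Set.mem_Icc]
    simpa only [abs_le] using this
  obtain ⟨i, j, hij, heq⟩ := box.finite_toSet.exists_lt_map_eq_of_forall_mem hmem
  refine ⟨K + i, j - i, by omega, ?_⟩
  rw [show K + i + (j - i) = K + j by omega]
  have hq : formSeq (mDigit x) (a, b, c) (K + i) = formSeq (mDigit x) (a, b, c) (K + j) := heq
  have hi := hasRoots_formSeq hx h0 (K + i)
  rw [hq] at hi
  refine hi.eq_of_hasRoots (hasRoots_formSeq hx h0 (K + j)) (ne_of_gt ?_)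
  exact (hK (K + i) (by omega)).1.2.trans (hX.one_lt (hK (K + j) (by omega)).2)

end MinusCF

open MinusCF in
theorem stmt_11_general (w v : ℝ) (hw : Irrational w) (hv : Irrational v)
    (aw bw cw : ℤ) (haw : aw ≠ 0)
    (hqw : (aw : ℝ) * w ^ 2 + (bw : ℝ) * w + (cw : ℝ) = 0) :
    (∃ p N M s : ℕ, 0 < p ∧
        (∀ i, mDigit w (N + i + p) = mDigit w (N + i)) ∧
        (∀ i, mDigit v (M + i + p) = mDigit v (M + i)) ∧
        (∀ i, mDigit v (M + i) = mDigit w (N + s + i))) ↔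
      (∃ g : Matrix.SpecialLinearGroup (Fin 2) ℤ,
        v = ((g 0 0 : ℝ) * w + (g 0 1 : ℝ)) / ((g 1 0 : ℝ) * w + (g 1 1 : ℝ))) := by
  constructor
  · rintro ⟨p, N, M, s, -, -, -, hmatch⟩
    have hW : IsCompleteQuotients (fun i => mDigit v (M + i)) (fun i => mIter w (N + s + i)) := by
      simpa only [hmatch] using (isCompleteQuotients_mIter hw).shift (N + s)
    have heq : mIter v M = mIter w (N + s) := ((isCompleteQuotients_mIter hv).shift M).head_eq hW
    obtain ⟨g, hg⟩ := exists_mIter_eq_mobius hv M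
    obtain ⟨h, hh⟩ := exists_mIter_eq_mobius hw (N + s)
    refine ⟨g⁻¹ * h, ?_⟩
    show v = mobius (g⁻¹ * h) w
    rw [mobius_mul _ _ hw, ← hh, ← heq, hg, mobius_inv_mobius g (mobius_denom_ne_zero g hv)]
  · rintro ⟨g, hg⟩
    obtain ⟨m, n, hmn⟩ : TailEquiv v w := hg ▸ tailEquiv_mobius g hw
    obtain ⟨N, p, hp, hper⟩ := exists_mIter_add_eq hw haw hqw
    have hw_per := mDigit_add_of_mIter_eq hper
    have hvw := mDigit_add_of_mIter_eq hmn
    refine ⟨p, N + n, m + N, 0, hp, fun i => ?_, fun i => ?_, fun i => ?_⟩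
    · convert hw_per (n + i) using 2 <;> omega
    · rw [show m + N + i + p = m + (N + i + p) by omega, hvw, show m + N + i = m + (N + i) by omega,
        hvw]
      convert hw_per (n + i) using 2 <;> omega
    · rw [show m + N + i = m + (N + i) by omega, hvw]
      congr 1; omega

theorem stmt_11 (w v : ℝ) (hw : Irrational w) (hv : Irrational v)
    (aw bw cw : ℤ) (haw : aw ≠ 0)
    (hqw : (aw : ℝ) * w ^ 2 + (bw : ℝ) * w + (cw : ℝ) = 0)
    (av bv cv : ℤ) (hav : av ≠ 0)
    (hqv : (av : ℝ) * v ^ 2 + (bv : ℝ) * v + (cv : ℝ) = 0) :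
    (∃ p N M s : ℕ, 0 < p ∧
        (∀ i, mDigit w (N + i + p) = mDigit w (N + i)) ∧
        (∀ i, mDigit v (M + i + p) = mDigit v (M + i)) ∧
        (∀ i, mDigit v (M + i) = mDigit w (N + s + i))) ↔
      (∃ g : Matrix.SpecialLinearGroup (Fin 2) ℤ,
        v = ((g 0 0 : ℝ) * w + (g 0 1 : ℝ)) / ((g 1 0 : ℝ) * w + (g 1 1 : ℝ))) :=
  stmt_11_general w v hw hv aw bw cw haw hqw
end

section
/- The odd-indexed Pell numbers P₁ = 1, P₃ = 5, P₅ = 29, ... (where P₀ = 0, P₁ = 1, P_{n+1} = 2P_n + P_{n-1}) are Markov numbers: for each n ≥ 0, there exist positive integers a, b with a² + b² + P_{2n+1}² = 3·a·b·P_{2n+1}; concretely, for n ≥ 1 the triple (P_{2n-1}, 2, P_{2n+1}) satisfies x² + y² + z² = 3xyz, i.e. P_{2n-1}² + 4 + P_{2n+1}² = 6·P_{2n-1}·P_{2n+1}. -/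
/-- Pell numbers: P₀ = 0, P₁ = 1, P_{n+2} = 2 P_{n+1} + P_n. -/
def pell : ℕ → ℤ
  | 0 => 0
  | 1 => 1
  | (n + 2) => 2 * pell (n + 1) + pell n

theorem stmt_17 :
    (∀ n : ℕ, 1 ≤ n →
      pell (2 * n - 1) ^ 2 + pell (2 * n + 1) ^ 2 + 4 =
        6 * pell (2 * n - 1) * pell (2 * n + 1) ∧
      pell (2 * n - 1) ^ 2 + 2 ^ 2 + pell (2 * n + 1) ^ 2 =
        3 * pell (2 * n - 1) * 2 * pell (2 * n + 1)) ∧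
    (∀ n : ℕ, ∃ a b : ℤ, 0 < a ∧ 0 < b ∧
      a ^ 2 + b ^ 2 + pell (2 * n + 1) ^ 2 = 3 * a * b * pell (2 * n + 1)) := by
  have step : ∀ n : ℕ, pell (n + 4) = 6 * pell (n + 2) - pell n := by
    intro n
    show 2 * pell (n + 3) + pell (n + 2) = _
    show 2 * (2 * pell (n + 2) + pell (n + 1)) + pell (n + 2) = _
    have : pell (n + 2) = 2 * pell (n + 1) + pell n := rfl
    linarith
  have key : ∀ n : ℕ, 1 ≤ n →
      pell (2 * n - 1) ^ 2 + pell (2 * n + 1) ^ 2 + 4 =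
        6 * pell (2 * n - 1) * pell (2 * n + 1) := by
    intro n hn
    induction n with
    | zero => omega
    | succ m ih =>
      rcases Nat.eq_or_lt_of_le hn with h | h
      · simp [← h]; decide
      · have hm : 1 ≤ m := by omega
        have ihm := ih hm
        have e1 : 2 * (m + 1) - 1 = 2 * m - 1 + 2 := by omega
        have e2 : 2 * (m + 1) + 1 = 2 * m - 1 + 4 := by omega
        have e3 : 2 * m + 1 = 2 * m - 1 + 2 := by omega
        rw [e1, e2, step (2 * m - 1)]
        rw [e3] at ihm
        nlinarith [ihm]
  constructor
  · intro n hn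
    have h := key n hn
    exact ⟨h, by linarith⟩
  · intro n
    cases n with
    | zero => exact ⟨1, 1, one_pos, one_pos, by decide⟩
    | succ m =>
      have hm : 1 ≤ m + 1 := by omega
      have h := key (m + 1) hm
      have pos : ∀ k : ℕ, 0 < pell (k + 1) := by
        intro k
        induction k using Nat.strong_induction_on with
        | _ k ih =>
          match k with
          | 0 => decide
          | 1 => decide
          | (j + 2) =>
            have h1 := ih (j + 1) (by omega)
            have h2 : 0 ≤ pell (j + 1) := by
              match j with
              | 0 => decide
              | (i + 1) => exact le_of_lt (ih (i + 1) (by omega))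
            show 0 < 2 * pell (j + 2) + pell (j + 1)
            have := ih j (by omega)
            linarith
      have hp : 0 < pell (2 * (m + 1) - 1) := by
        have e : 2 * (m + 1) - 1 = 2 * m + 1 := by omega
        rw [e]; exact pos (2 * m)
      exact ⟨pell (2 * (m + 1) - 1), 2, hp, two_pos, by linarith⟩
end
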